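/- arXiv:1411.1742 — 2 statements merged into one kernel-verified Lean document; each statement's English description precedes it below -/
import Mathlib

section
/- Let n ≥ 3 and 1 ≤ k ≤ n−2 be integers and let c : ℝⁿ → ℝ² be the index-k cusp map. The critical set of c equals the range of the smooth embedding t ↦ (t², t, 0, …, 0) from ℝ to ℝⁿ; in particular, the critical set of c is a 1-dimensional smooth submanifold of ℝⁿ. -/
/-!
The differential of `c` at `x` is `v ↦ (v₀, 3 (x₁² - x₀) v₁ - 3 x₁ v₀ + ∑ ±2 xᵢ vᵢ)`. A linear map
`ℝⁿ → ℝ²` whose first row is `v ↦ v₀` is onto iff its second row does not vanish on some basis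
vector `eⱼ` with `j ≠ 0`, so `x` is critical iff `x₀ = x₁²` and `xᵢ = 0` for `i ≥ 2`: this is the
parabola `t ↦ (t², t, 0, …, 0)`. The polynomial automorphism `y ↦ (y₁, y₀ - y₁², y₂, …)` of `ℝⁿ`,
with polynomial inverse `z ↦ (z₁ + z₀², z₀, z₂, …)`, maps the parabola onto the first coordinate
axis.
-/

open ContinuousLinearMap
open scoped ContDiff

section Linear

variable {𝕜 ι : Type*} [Field 𝕜] [Fintype ι] [DecidableEq ι]

theorem LinearMap.surjective_proj_prod_iff (i₀ : ι) (ℓ : (ι → 𝕜) →ₗ[𝕜] 𝕜) :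
    Function.Surjective ((LinearMap.proj i₀).prod ℓ) ↔ ∃ j ≠ i₀, ℓ (Pi.single j 1) ≠ 0 := by
  constructor
  · intro hsurj
    by_contra! hℓ
    have hℓ_eq : ℓ = ℓ (Pi.single i₀ 1) • LinearMap.proj i₀ := by
      ext j
      by_cases hj : j = i₀
      · simp [hj]
      · simp [hℓ j hj, Ne.symm hj]
    obtain ⟨v, hv⟩ := hsurj (0, 1)
    have hv₀ : v i₀ = 0 := congrArg Prod.fst hv
    have hv₁ : ℓ v = 1 := congrArg Prod.snd hv
    rw [hℓ_eq] at hv₁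
    simp [hv₀] at hv₁
  · rintro ⟨j, hj, hℓj⟩ ⟨a, b⟩
    refine ⟨a • Pi.single i₀ 1 +
      ((b - a * ℓ (Pi.single i₀ 1)) / ℓ (Pi.single j 1)) • Pi.single j 1, ?_⟩
    simp [hj, div_mul_cancel₀ _ hℓj]

end Linear

section Cusp

variable {ι : Type*} [Fintype ι]

def cuspMap (i₀ i₁ : ι) (w : ι → ℝ) (x : ι → ℝ) : ℝ × ℝ :=
  (x i₀, x i₁ ^ 3 - 3 * x i₀ * x i₁ + ∑ i, w i * x i ^ 2)

def cuspMapSndFDeriv (i₀ i₁ : ι) (w x : ι → ℝ) : (ι → ℝ) →L[ℝ] ℝ :=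
  (3 * (x i₁ ^ 2 - x i₀)) • proj i₁ - (3 * x i₁) • proj i₀ + ∑ i, (2 * w i * x i) • proj i

theorem hasFDerivAt_cuspMap (i₀ i₁ : ι) (w x : ι → ℝ) :
    HasFDerivAt (cuspMap i₀ i₁ w) ((proj i₀).prod (cuspMapSndFDeriv i₀ i₁ w x)) x := by
  have hcoord (i : ι) : HasFDerivAt (fun y : ι → ℝ => y i) (proj i : (ι → ℝ) →L[ℝ] ℝ) x :=
    hasFDerivAt_apply i x
  refine (hcoord i₀).prodMk <| HasFDerivAt.congr_fderiv
    ((((hcoord i₁).pow 3).sub (((hcoord i₀).const_mul 3).mul (hcoord i₁))).add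
      (HasFDerivAt.fun_sum fun i _ => ((hcoord i).pow 2).const_mul (w i))) ?_
  refine ContinuousLinearMap.ext fun v => ?_
  have hsum : ∑ i, w i * (2 * x i * v i) = ∑ i, 2 * w i * x i * v i :=
    Finset.sum_congr rfl fun i _ => by ring
  simp only [cuspMapSndFDeriv, add_apply, sub_apply, smul_apply, proj_apply, sum_apply,
    smul_eq_mul, nsmul_eq_mul, Nat.cast_ofNat, Nat.add_one_sub_one, pow_one, hsum]
  ring

theorem cuspMapSndFDeriv_apply_single [DecidableEq ι] (i₀ i₁ : ι) (w x : ι → ℝ) {j : ι}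
    (hj : j ≠ i₀) :
    cuspMapSndFDeriv i₀ i₁ w x (Pi.single j 1) =
      (if j = i₁ then 3 * (x i₁ ^ 2 - x i₀) else 0) + 2 * w j * x j := by
  simp [cuspMapSndFDeriv, Pi.single_apply, hj, eq_comm]

theorem not_surjective_fderiv_cuspMap_iff [DecidableEq ι] {i₀ i₁ : ι} (h : i₀ ≠ i₁)
    {w : ι → ℝ} (hw₁ : w i₁ = 0) (hw : ∀ i, i ≠ i₀ → i ≠ i₁ → w i ≠ 0) (x : ι → ℝ) :
    ¬ Function.Surjective (fderiv ℝ (cuspMap i₀ i₁ w) x) ↔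
      x i₀ = x i₁ ^ 2 ∧ ∀ i, i ≠ i₀ → i ≠ i₁ → x i = 0 := by
  rw [(hasFDerivAt_cuspMap i₀ i₁ w x).fderiv, ← coe_coe, coe_prod, coe_proj,
    LinearMap.surjective_proj_prod_iff]
  push Not
  constructor
  · intro hcrit
    refine ⟨?_, fun i hi₀ hi₁ => ?_⟩
    · have h₁ := hcrit i₁ h.symm
      rw [coe_coe, cuspMapSndFDeriv_apply_single i₀ i₁ w x h.symm, if_pos rfl, hw₁] at h₁
      linarith
    · have hᵢ := hcrit i hi₀
      rw [coe_coe, cuspMapSndFDeriv_apply_single i₀ i₁ w x hi₀] at hᵢ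
      simpa [hi₁, hw i hi₀ hi₁] using hᵢ
  · rintro ⟨hx₀, hx⟩ j hj
    rw [coe_coe, cuspMapSndFDeriv_apply_single i₀ i₁ w x hj]
    by_cases hj₁ : j = i₁
    · simp [hj₁, hx₀, hw₁]
    · simp [hj₁, hx j hj hj₁]

end Cusp

section Parabola

variable {ι : Type*} [DecidableEq ι] {i₀ i₁ : ι}

def parabola (i₀ i₁ : ι) (t : ℝ) : ι → ℝ :=
  fun i => if i = i₀ then t ^ 2 else if i = i₁ then t else 0

theorem range_parabola (h : i₀ ≠ i₁) :
    Set.range (parabola i₀ i₁) = {x | x i₀ = x i₁ ^ 2 ∧ ∀ i, i ≠ i₀ → i ≠ i₁ → x i = 0} := by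
  ext x
  constructor
  · rintro ⟨t, rfl⟩
    simp +contextual [parabola, h.symm]
  · rintro ⟨hx₀, hx⟩
    refine ⟨x i₁, funext fun i => ?_⟩
    by_cases hi₀ : i = i₀
    · simp [parabola, hi₀, hx₀]
    by_cases hi₁ : i = i₁
    · simp [parabola, hi₁, h.symm]
    · simp [parabola, hi₀, hi₁, hx i hi₀ hi₁]

theorem contDiff_parabola [Fintype ι] : ContDiff ℝ ∞ (parabola i₀ i₁) :=
  contDiff_pi.2 fun i => by simp only [parabola]; split_ifs <;> fun_prop

theorem isEmbedding_parabola (h : i₀ ≠ i₁) : Topology.IsEmbedding (parabola i₀ i₁) :=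
  Function.LeftInverse.isEmbedding (f := fun x => x i₁) (fun t => by simp [parabola, h.symm])
    (continuous_apply i₁) (continuous_pi fun i => by simp only [parabola]; split_ifs <;> fun_prop)

def parabolaStraightening (h : i₀ ≠ i₁) : (ι → ℝ) ≃ (ι → ℝ) where
  toFun y i := if i = i₀ then y i₁ else if i = i₁ then y i₀ - y i₁ ^ 2 else y i
  invFun z i := if i = i₀ then z i₁ + z i₀ ^ 2 else if i = i₁ then z i₀ else z i
  left_inv y := funext fun i => by
    by_cases hi₀ : i = i₀
    · simp [hi₀, h.symm]
    by_cases hi₁ : i = i₁ <;> simp [hi₀, hi₁, h.symm]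
  right_inv z := funext fun i => by
    by_cases hi₀ : i = i₀
    · simp [hi₀, h.symm]
    by_cases hi₁ : i = i₁ <;> simp [hi₀, hi₁, h.symm]

theorem contDiff_parabolaStraightening [Fintype ι] (h : i₀ ≠ i₁) :
    ContDiff ℝ ∞ (parabolaStraightening h) :=
  contDiff_pi.2 fun i => by
    simp only [parabolaStraightening, Equiv.coe_fn_mk]; split_ifs <;> fun_prop

theorem contDiff_parabolaStraightening_symm [Fintype ι] (h : i₀ ≠ i₁) :
    ContDiff ℝ ∞ (parabolaStraightening h).symm :=
  contDiff_pi.2 fun i => by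
    simp only [parabolaStraightening, Equiv.coe_fn_symm_mk]; split_ifs <;> fun_prop

theorem parabolaStraightening_image_range_parabola (h : i₀ ≠ i₁) :
    parabolaStraightening h '' Set.range (parabola i₀ i₁) = {z | ∀ i, i ≠ i₀ → z i = 0} := by
  ext z
  rw [Equiv.image_eq_preimage_symm, Set.mem_preimage, range_parabola h]
  simp only [parabolaStraightening, Equiv.coe_fn_symm_mk, Set.mem_ofPred_eq, if_pos,
    if_neg h.symm, add_eq_right]
  constructor
  · rintro ⟨hz₁, hz⟩ i hi₀
    by_cases hi₁ : i = i₁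
    · simpa [hi₁, h.symm] using hz₁
    · simpa [hi₀, hi₁] using hz i hi₀ hi₁
  · intro hz
    refine ⟨by simpa using hz i₁ h.symm, fun i hi₀ hi₁ => by simpa [hi₀, hi₁] using hz i hi₀⟩

end Parabola

def cuspWeight {n : ℕ} (k : ℕ) (i : Fin n) : ℝ :=
  if (i : ℕ) ≤ 1 then 0 else if (i : ℕ) ≤ k + 1 then -1 else 1

theorem cuspWeight_ne_zero {n k : ℕ} {i : Fin n} (hi : 2 ≤ (i : ℕ)) : cuspWeight k i ≠ 0 := by
  unfold cuspWeight
  split_ifs <;> first | omega | norm_num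

theorem cuspWeight_mul_sq {n : ℕ} (k : ℕ) (i : Fin n) (a : ℝ) :
    cuspWeight k i * a ^ 2 =
      if (i : ℕ) ≤ 1 then 0 else if (i : ℕ) ≤ k + 1 then -a ^ 2 else a ^ 2 := by
  unfold cuspWeight
  split_ifs <;> ring

/-- The critical set of the index-`k` cusp map `c : ℝⁿ → ℝ²` equals the range
of the smooth embedding `t ↦ (t², t, 0, …, 0)`; in particular it is a 1-dimensional smooth
submanifold of `ℝⁿ` (expressed by straightening charts). -/
theorem stmt10 (n k : ℕ) (hn : 3 ≤ n)
    (c : (Fin n → ℝ) → ℝ × ℝ)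
    (hc : ∀ x : Fin n → ℝ, c x =
      (x ⟨0, by omega⟩,
        (x ⟨1, by omega⟩) ^ 3 - 3 * x ⟨0, by omega⟩ * x ⟨1, by omega⟩ +
          ∑ i : Fin n, if (i : ℕ) ≤ 1 then 0
            else if (i : ℕ) ≤ k + 1 then -(x i) ^ 2 else (x i) ^ 2))
    (C : Set (Fin n → ℝ))
    (hC : C = {x : Fin n → ℝ | ¬ Function.Surjective (fderiv ℝ c x)})
    (e : ℝ → (Fin n → ℝ))
    (he : ∀ t : ℝ, e t = fun i : Fin n =>
      if (i : ℕ) = 0 then t ^ 2 else if (i : ℕ) = 1 then t else 0) :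
    -- the critical set is the range of `e`, which is a smooth embedding
    C = Set.range e ∧ ContDiff ℝ (⊤ : ℕ∞) e ∧ Topology.IsEmbedding e ∧
    -- `C` is a 1-dimensional smooth submanifold: near each of its points there is a smooth
    -- chart of `ℝⁿ` straightening `C` to a 1-dimensional coordinate axis
    (∀ x ∈ C, ∃ (U V : Set (Fin n → ℝ)) (φ ψ : (Fin n → ℝ) → (Fin n → ℝ)),
      IsOpen U ∧ x ∈ U ∧ IsOpen V ∧
      ContDiffOn ℝ (⊤ : ℕ∞) φ U ∧ ContDiffOn ℝ (⊤ : ℕ∞) ψ V ∧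
      Set.MapsTo φ U V ∧ Set.MapsTo ψ V U ∧ Set.InvOn ψ φ U V ∧
      φ '' (U ∩ C) = V ∩ {y : Fin n → ℝ | ∀ i : Fin n, (i : ℕ) ≠ 0 → y i = 0}) := by
  set i₀ : Fin n := ⟨0, by omega⟩
  set i₁ : Fin n := ⟨1, by omega⟩
  have h₀₁ : i₀ ≠ i₁ := by simp [i₀, i₁, Fin.ext_iff]
  have hw : ∀ i, i ≠ i₀ → i ≠ i₁ → cuspWeight k i ≠ 0 := fun i hi₀ hi₁ =>
    cuspWeight_ne_zero (by simp only [i₀, i₁, ne_eq, Fin.ext_iff] at hi₀ hi₁; omega)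
  have hc' : c = cuspMap i₀ i₁ (cuspWeight k) :=
    funext fun x => by simp only [hc, cuspMap, cuspWeight_mul_sq]
  have he' : e = parabola i₀ i₁ := by
    ext t i
    simp only [he, parabola, i₀, i₁, Fin.ext_iff]
  have hC' : C = Set.range e := by
    ext x
    rw [hC, he', range_parabola h₀₁, Set.mem_ofPred_eq, Set.mem_ofPred_eq, hc']
    exact not_surjective_fderiv_cuspMap_iff h₀₁ (by simp [cuspWeight, i₁]) hw x
  subst hC' he'
  refine ⟨rfl, contDiff_parabola, isEmbedding_parabola h₀₁, fun _ _ => ?_⟩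
  set Φ := parabolaStraightening h₀₁
  refine ⟨Set.univ, Set.univ, Φ, Φ.symm, isOpen_univ, trivial, isOpen_univ,
    (contDiff_parabolaStraightening h₀₁).contDiffOn,
    (contDiff_parabolaStraightening_symm h₀₁).contDiffOn,
    Set.mapsTo_univ _ _, Set.mapsTo_univ _ _, Φ.symm.invOn, ?_⟩
  rw [Set.univ_inter, Set.univ_inter, parabolaStraightening_image_range_parabola h₀₁]
  simp [i₀, Fin.ext_iff]
end

section
/- Let n ≥ 3 and 1 ≤ k ≤ n−2 be integers, and for a ∈ ℝ define g_a : ℝ^{n−1} → ℝ by g_a(x₂,…,xₙ) = x₂³ − 3a x₂ − ∑_{i=3}^{k+2} x_i² + ∑_{i=k+3}^{n} x_i² (the second coordinate of the cusp map restricted to the slice x₁ = a). Then: if a < 0, g_a has no critical points; if a = 0, g_a has exactly one critical point, namely 0, and the second derivative (Hessian) of g_a at 0 is degenerate; if a > 0, g_a has exactly two critical points, namely (√a, 0, …, 0) and (−√a, 0, …, 0), both of which are nondegenerate (the Hessian of g_a at each is a nondegenerate bilinear form), with critical values −2a√a and 2a√a respectively. -/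
/-!
The function `g a` is a sum of one-variable functions of distinct coordinates, so its
differential and Hessian are diagonal: `y` is critical iff `3 y₂² = 3a` and all other
coordinates vanish, and the Hessian at `y` is `diag(6 y₂, ∓2, …, ∓2)`, which is
nondegenerate exactly when `y₂ ≠ 0`.
-/

open Matrix

section SeparableSum

variable {ι : Type*} [Fintype ι] {φ φ' φ'' : ι → ℝ → ℝ}

theorem hasFDerivAt_sum_apply (hφ : ∀ i t, HasDerivAt (φ i) (φ' i t) t) (y : ι → ℝ) :
    HasFDerivAt (fun y : ι → ℝ => ∑ i, φ i (y i))
      (∑ i, φ' i (y i) • (ContinuousLinearMap.proj i : (ι → ℝ) →L[ℝ] ℝ)) y :=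
  HasFDerivAt.fun_sum fun i _ => (hφ i (y i)).comp_hasFDerivAt y (hasFDerivAt_apply i y)

theorem fderiv_sum_apply (hφ : ∀ i t, HasDerivAt (φ i) (φ' i t) t) :
    fderiv ℝ (fun y : ι → ℝ => ∑ i, φ i (y i)) =
      fun y => ∑ i, φ' i (y i) • (ContinuousLinearMap.proj i : (ι → ℝ) →L[ℝ] ℝ) :=
  funext fun y => (hasFDerivAt_sum_apply hφ y).fderiv

theorem fderiv_sum_apply_eq_zero_iff (hφ : ∀ i t, HasDerivAt (φ i) (φ' i t) t) (y : ι → ℝ) :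
    fderiv ℝ (fun y : ι → ℝ => ∑ i, φ i (y i)) y = 0 ↔ ∀ i, φ' i (y i) = 0 := by
  have hdot : ∀ u, fderiv ℝ (fun y : ι → ℝ => ∑ i, φ i (y i)) y u = (fun i => φ' i (y i)) ⬝ᵥ u :=
    fun u => by simp [fderiv_sum_apply hφ, dotProduct]
  simp only [ContinuousLinearMap.ext_iff, _root_.zero_apply, hdot,
    dotProduct_eq_zero_iff, funext_iff, Pi.zero_apply]

theorem hasFDerivAt_sum_smul_proj (hφ' : ∀ i t, HasDerivAt (φ' i) (φ'' i t) t) (p : ι → ℝ) :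
    HasFDerivAt
      (fun y : ι → ℝ => ∑ i, φ' i (y i) • (ContinuousLinearMap.proj i : (ι → ℝ) →L[ℝ] ℝ))
      (∑ i, (φ'' i (p i) • (ContinuousLinearMap.proj i : (ι → ℝ) →L[ℝ] ℝ)).smulRight
        (ContinuousLinearMap.proj i : (ι → ℝ) →L[ℝ] ℝ)) p :=
  HasFDerivAt.fun_sum fun i _ => by
    have h := (hφ' i (p i)).comp_hasFDerivAt p (hasFDerivAt_apply (𝕜 := ℝ) i p)
    exact h.smul_const (ContinuousLinearMap.proj i : (ι → ℝ) →L[ℝ] ℝ)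

theorem forall_fderiv_fderiv_sum_apply_eq_zero_iff (hφ : ∀ i t, HasDerivAt (φ i) (φ' i t) t)
    (hφ' : ∀ i t, HasDerivAt (φ' i) (φ'' i t) t) (p v : ι → ℝ) :
    (∀ u, fderiv ℝ (fderiv ℝ (fun y : ι → ℝ => ∑ i, φ i (y i))) p v u = 0) ↔
      ∀ i, φ'' i (p i) * v i = 0 := by
  have hdot : ∀ u, fderiv ℝ (fderiv ℝ (fun y : ι → ℝ => ∑ i, φ i (y i))) p v u =
      (fun i => φ'' i (p i) * v i) ⬝ᵥ u := fun u => by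
    simp [fderiv_sum_apply hφ, (hasFDerivAt_sum_smul_proj hφ' p).fderiv, dotProduct]
  simp only [hdot, dotProduct_eq_zero_iff, funext_iff, Pi.zero_apply]

end SeparableSum

section Cusp

variable {m : ℕ} {a t : ℝ} {k : ℕ}

-- Coordinates are 0-indexed: `j = 0` is the paper's `x₂`.
def cuspTerm (a : ℝ) (k j : ℕ) (t : ℝ) : ℝ :=
  if j = 0 then t ^ 3 - 3 * a * t else if j ≤ k then -t ^ 2 else t ^ 2

def cuspTerm' (a : ℝ) (k j : ℕ) (t : ℝ) : ℝ :=
  if j = 0 then 3 * t ^ 2 - 3 * a else if j ≤ k then -(2 * t) else 2 * t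

def cuspTerm'' (k j : ℕ) (t : ℝ) : ℝ :=
  if j = 0 then 6 * t else if j ≤ k then -2 else 2

def cuspSlice (a : ℝ) (k : ℕ) : (Fin m → ℝ) → ℝ :=
  fun y => ∑ j : Fin m, cuspTerm a k j (y j)

def axisPoint (t : ℝ) : Fin m → ℝ :=
  fun j => if (j : ℕ) = 0 then t else 0

theorem hasDerivAt_cuspTerm (j : ℕ) (t : ℝ) :
    HasDerivAt (cuspTerm a k j) (cuspTerm' a k j t) t := by
  unfold cuspTerm cuspTerm'
  split_ifs
  · exact ((hasDerivAt_pow 3 t).fun_sub ((hasDerivAt_id' t).const_mul (3 * a))).congr_deriv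
      (by push_cast; ring)
  · exact (hasDerivAt_pow 2 t).fun_neg.congr_deriv (by push_cast; ring)
  · exact (hasDerivAt_pow 2 t).congr_deriv (by push_cast; ring)

theorem hasDerivAt_cuspTerm' (j : ℕ) (t : ℝ) :
    HasDerivAt (cuspTerm' a k j) (cuspTerm'' k j t) t := by
  unfold cuspTerm' cuspTerm''
  split_ifs
  · exact (((hasDerivAt_pow 2 t).const_mul 3).sub_const (3 * a)).congr_deriv (by push_cast; ring)
  · exact ((hasDerivAt_id' t).const_mul 2).fun_neg.congr_deriv (by ring)
  · exact ((hasDerivAt_id' t).const_mul 2).congr_deriv (by ring)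

theorem cuspTerm'_eq_zero_iff (j : ℕ) (t : ℝ) :
    cuspTerm' a k j t = 0 ↔ if j = 0 then t ^ 2 = a else t = 0 := by
  unfold cuspTerm'
  split_ifs <;> constructor <;> intro h <;> linarith

theorem cuspSlice_eq (hm : 0 < m) (y : Fin m → ℝ) :
    y ⟨0, hm⟩ ^ 3 - 3 * a * y ⟨0, hm⟩ +
        ∑ j : Fin m, (if (j : ℕ) = 0 then 0 else if (j : ℕ) ≤ k then -(y j) ^ 2 else (y j) ^ 2) =
      cuspSlice a k y := by
  have hsplit : ∀ j : Fin m, cuspTerm a k j (y j) =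
      (if j = ⟨0, hm⟩ then y j ^ 3 - 3 * a * y j else 0) +
        (if (j : ℕ) = 0 then 0 else if (j : ℕ) ≤ k then -(y j) ^ 2 else (y j) ^ 2) := by
    intro j
    simp only [cuspTerm, Fin.ext_iff]
    split_ifs <;> ring
  simp only [cuspSlice, hsplit, Finset.sum_add_distrib, Finset.sum_ite_eq', Finset.mem_univ,
    if_true]

theorem axisPoint_zero : axisPoint (m := m) 0 = 0 := by
  funext j
  simp [axisPoint]

theorem axisPoint_ne_zero (hm : 0 < m) (ht : t ≠ 0) : axisPoint (m := m) t ≠ 0 :=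
  fun h => ht (by simpa [axisPoint] using congrFun h ⟨0, hm⟩)

theorem cuspSlice_axisPoint (hm : 0 < m) :
    cuspSlice a k (axisPoint (m := m) t) = t ^ 3 - 3 * a * t := by
  unfold cuspSlice
  rw [Finset.sum_eq_single ⟨0, hm⟩]
  · simp [axisPoint, cuspTerm]
  · intro j _ hj
    have hj : (j : ℕ) ≠ 0 := fun h => hj (Fin.ext h)
    simp [axisPoint, cuspTerm, hj]
  · simp

theorem fderiv_cuspSlice_eq_zero_iff (hm : 0 < m) (y : Fin m → ℝ) :
    fderiv ℝ (cuspSlice a k) y = 0 ↔ ∃ t, t ^ 2 = a ∧ y = axisPoint t := by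
  unfold cuspSlice
  rw [fderiv_sum_apply_eq_zero_iff (fun j : Fin m => hasDerivAt_cuspTerm j)]
  simp only [cuspTerm'_eq_zero_iff]
  constructor
  · intro h
    refine ⟨y ⟨0, hm⟩, by simpa using h ⟨0, hm⟩, funext fun j => ?_⟩
    by_cases hj : (j : ℕ) = 0
    · simp [axisPoint, show j = ⟨0, hm⟩ from Fin.ext hj]
    · simpa [axisPoint, hj] using h j
  · rintro ⟨t, rfl, rfl⟩ j
    by_cases hj : (j : ℕ) = 0 <;> simp [axisPoint, hj]

theorem hessian_cuspSlice_zero_degenerate :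
    ∀ u, fderiv ℝ (fderiv ℝ (cuspSlice (m := m) 0 k)) 0 (axisPoint 1) u = 0 := by
  unfold cuspSlice
  rw [forall_fderiv_fderiv_sum_apply_eq_zero_iff (fun j : Fin m => hasDerivAt_cuspTerm j)
    (fun j : Fin m => hasDerivAt_cuspTerm' j)]
  intro j
  by_cases hj : (j : ℕ) = 0 <;> simp [axisPoint, cuspTerm'', hj]

theorem hessian_cuspSlice_nondegenerate (ht : t ≠ 0) (v : Fin m → ℝ)
    (hv : ∀ u, fderiv ℝ (fderiv ℝ (cuspSlice a k)) (axisPoint t) v u = 0) : v = 0 := by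
  unfold cuspSlice at hv
  rw [forall_fderiv_fderiv_sum_apply_eq_zero_iff (fun j : Fin m => hasDerivAt_cuspTerm j)
    (fun j : Fin m => hasDerivAt_cuspTerm' j)] at hv
  funext j
  refine (mul_eq_zero.1 (hv j)).resolve_left ?_
  unfold cuspTerm'' axisPoint
  split_ifs <;> simp_all

end Cusp

/-- For `n ≥ 3`, `1 ≤ k ≤ n-2` and `a ∈ ℝ`, let
`g a : ℝ^{n-1} → ℝ`, `g a (x₂,…,xₙ) = x₂³ - 3ax₂ - ∑_{i=3}^{k+2} xᵢ² + ∑_{i=k+3}^{n} xᵢ²`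
(the second coordinate of the cusp map on the slice `x₁ = a`; coordinates are 0-indexed,
mathematical `xᵢ` is `y ⟨i-2,_⟩`). Then: for `a < 0`, `g a` has no critical points; for
`a = 0`, it has the single critical point `0`, with degenerate Hessian there; for `a > 0`,
it has exactly the two critical points `(±√a, 0, …, 0)`, both nondegenerate, with critical
values `∓2a√a`. -/
theorem stmt14 (n k : ℕ) (hn : 3 ≤ n)
    (g : ℝ → (Fin (n - 1) → ℝ) → ℝ)
    (hg : ∀ (a : ℝ) (y : Fin (n - 1) → ℝ), g a y =
      (y ⟨0, by omega⟩) ^ 3 - 3 * a * y ⟨0, by omega⟩ +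
        ∑ j : Fin (n - 1), if (j : ℕ) = 0 then 0
          else if (j : ℕ) ≤ k then -(y j) ^ 2 else (y j) ^ 2) :
    -- for `a < 0`: no critical points
    (∀ a : ℝ, a < 0 → ∀ y : Fin (n - 1) → ℝ, fderiv ℝ (g a) y ≠ 0) ∧
    -- for `a = 0`: exactly one critical point, `0`, with degenerate Hessian
    ({y : Fin (n - 1) → ℝ | fderiv ℝ (g 0) y = 0} = {0} ∧
      ∃ v : Fin (n - 1) → ℝ, v ≠ 0 ∧ ∀ u : Fin (n - 1) → ℝ,
        fderiv ℝ (fderiv ℝ (g 0)) 0 v u = 0) ∧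
    -- for `a > 0`: exactly two critical points `(±√a,0,…,0)`, both nondegenerate,
    -- with critical values `∓2a√a`
    (∀ a : ℝ, 0 < a →
      ∀ pPlus pMinus : Fin (n - 1) → ℝ,
        pPlus = (fun j : Fin (n - 1) => if (j : ℕ) = 0 then Real.sqrt a else 0) →
        pMinus = (fun j : Fin (n - 1) => if (j : ℕ) = 0 then -Real.sqrt a else 0) →
        {y : Fin (n - 1) → ℝ | fderiv ℝ (g a) y = 0} = {pPlus, pMinus} ∧
        (∀ v : Fin (n - 1) → ℝ,
          (∀ u : Fin (n - 1) → ℝ, fderiv ℝ (fderiv ℝ (g a)) pPlus v u = 0) → v = 0) ∧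
        (∀ v : Fin (n - 1) → ℝ,
          (∀ u : Fin (n - 1) → ℝ, fderiv ℝ (fderiv ℝ (g a)) pMinus v u = 0) → v = 0) ∧
        g a pPlus = -2 * a * Real.sqrt a ∧ g a pMinus = 2 * a * Real.sqrt a) := by
  have hm : 0 < n - 1 := by omega
  have hga : ∀ a, g a = cuspSlice a k := fun a => funext fun y => (hg a y).trans (cuspSlice_eq hm y)
  simp only [hga]
  refine ⟨fun a ha y hy => ?_, ⟨?_, axisPoint 1, axisPoint_ne_zero hm one_ne_zero, ?_⟩,
    fun a ha pPlus pMinus hPlus hMinus => ?_⟩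
  · obtain ⟨t, ht, -⟩ := (fderiv_cuspSlice_eq_zero_iff hm y).1 hy
    linarith [sq_nonneg t]
  · ext y
    simp [fderiv_cuspSlice_eq_zero_iff hm, axisPoint_zero]
  · exact hessian_cuspSlice_zero_degenerate
  obtain rfl : pPlus = axisPoint √a := hPlus
  obtain rfl : pMinus = axisPoint (-√a) := hMinus
  have hsqrt : √a ^ 2 = a := Real.sq_sqrt ha.le
  have hroots : ∀ t, t ^ 2 = a ↔ t = √a ∨ t = -√a := fun t => by
    rw [← sq_eq_sq_iff_eq_or_eq_neg, hsqrt]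
  have hsqrt_ne : √a ≠ 0 := (Real.sqrt_pos.2 ha).ne'
  refine ⟨?_, hessian_cuspSlice_nondegenerate hsqrt_ne, hessian_cuspSlice_nondegenerate
    (neg_ne_zero.2 hsqrt_ne), ?_, ?_⟩
  · ext y
    simp only [Set.mem_ofPred_eq, fderiv_cuspSlice_eq_zero_iff hm, hroots, or_and_right,
      exists_or, exists_eq_left, Set.mem_insert_iff, Set.mem_singleton_iff]
  · rw [cuspSlice_axisPoint hm]
    linear_combination √a * hsqrt
  · rw [cuspSlice_axisPoint hm]
    linear_combination -√a * hsqrt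
end
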